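/- Let p ≥ 1, let β₁,…,β_{p−1} ∈ L, let q ≥ 0, and let γ ∈ Sym^q(L). Consider the symmetrization s(β₁,…,β_{p−1},γ) := Σ_{σ ∈ S_p} c_{σ(1)}c_{σ(2)}⋯c_{σ(p)} of the p-tuple (c₁,…,c_p) = (β₁,…,β_{p−1},γ) in R. Then: (a) if q > 1, s(β₁,…,β_{p−1},γ) lies in Σ_{r ≤ p+q−1} Sym^r(L) (the sum of the submodules Sym^r(L) over r ≤ p+q−1); (b) if q ≤ 1, s(β₁,…,β_{p−1},γ) lies in Sym^{p+q−1}(L). -/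

import Mathlib

/-!
`R = T(V)` is the tensor algebra of a vector space `V` over a field `k` of characteristic
zero; `freeLie k V` is the smallest Lie subalgebra of `R` (with the commutator bracket)
containing the image of `ι : V → R`, and `symL k V p` is the `k`-linear span of the
symmetrized products `s(β₁,…,β_p) = ∑_{σ ∈ S_p} β_{σ(1)} ⋯ β_{σ(p)}` with `βᵢ ∈ L`
(for `p = 0` this is `k·1`).
-/

noncomputable section

variable (k : Type*) [Field k] [CharZero k] (V : Type*) [AddCommGroup V] [Module k V]

attribute [local instance] LieRing.ofAssociativeRing

/-- The free Lie subalgebra `L` of the tensor algebra generated by `V`. -/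
def freeLie : LieSubalgebra k (TensorAlgebra k V) :=
  LieSubalgebra.lieSpan k (TensorAlgebra k V) (Set.range (TensorAlgebra.ι k (M := V)))

/-- `Sym^p(L)`: the span of the symmetrized products of `p` elements of `L`. -/
def symL (p : ℕ) : Submodule k (TensorAlgebra k V) :=
  Submodule.span k
    { x | ∃ β : Fin p → freeLie k V,
        x = ∑ σ : Equiv.Perm (Fin p),
              (List.ofFn fun i => ((β (σ i) : TensorAlgebra k V))).prod }

/-- Span of products of `m` elements of `L`. -/
def MM (m : ℕ) : Submodule k (TensorAlgebra k V) :=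
  Submodule.span k
    { x | ∃ l : List (TensorAlgebra k V),
        l.length = m ∧ (∀ a ∈ l, a ∈ freeLie k V) ∧ x = l.prod }

variable {k V}
set_option linter.unusedSectionVars false
set_option linter.unnecessarySimpa false

lemma mem_MM_of_list {l : List (TensorAlgebra k V)} (h : ∀ a ∈ l, a ∈ freeLie k V) :
    l.prod ∈ MM k V l.length :=
  Submodule.subset_span ⟨l, rfl, h, rfl⟩

lemma mem_MM_one {a : TensorAlgebra k V} (h : a ∈ freeLie k V) : a ∈ MM k V 1 := by
  have := mem_MM_of_list (l := [a]) (by simpa using h)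
  simpa using this

lemma MM_mul {p q : ℕ} {a b : TensorAlgebra k V} (ha : a ∈ MM k V p) (hb : b ∈ MM k V q) :
    a * b ∈ MM k V (p + q) := by
  have h : MM k V p * MM k V q ≤ MM k V (p + q) := by
    rw [MM, MM, Submodule.span_mul_span]
    apply Submodule.span_le.2
    rintro x ⟨y, ⟨l₁, rfl, h₁, rfl⟩, z, ⟨l₂, rfl, h₂, rfl⟩, rfl⟩
    exact Submodule.subset_span ⟨l₁ ++ l₂, by simp, by
      intro a ha; rcases List.mem_append.1 ha with h | h
      · exact h₁ a h
      · exact h₂ a h, (List.prod_append).symm⟩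
  exact h (Submodule.mul_mem_mul ha hb)

lemma zero_mem_MM (m : ℕ) : (0 : TensorAlgebra k V) ∈ MM k V m := Submodule.zero_mem _

lemma symL_le_MM (m : ℕ) : symL k V m ≤ MM k V m := by
  apply Submodule.span_le.2
  rintro x ⟨β, rfl⟩
  apply Submodule.sum_mem
  intro σ _
  have := mem_MM_of_list (l := List.ofFn fun i => ((β (σ i) : TensorAlgebra k V)))
    (by intro a ha; rcases List.mem_ofFn.1 ha with ⟨i, rfl⟩; exact (β (σ i)).2)
  simpa using this

/-- difference of products of permuted lists of Lie elements is a product of fewer. -/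
lemma perm_diff {l₁ l₂ : List (TensorAlgebra k V)} (hp : l₁.Perm l₂) :
    (∀ a ∈ l₁, a ∈ freeLie k V) → l₁.prod - l₂.prod ∈ MM k V (l₁.length - 1) := by
  induction hp with
  | nil => intro _; simpa using zero_mem_MM 0
  | @cons x t₁ t₂ hp ih =>
    intro h
    have hx : x ∈ freeLie k V := h x List.mem_cons_self
    have ht : ∀ a ∈ t₁, a ∈ freeLie k V := fun a ha => h a (List.mem_cons_of_mem x ha)
    rcases t₁ with _ | ⟨b, t⟩
    · have : t₂ = [] := List.Perm.eq_nil hp.symm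
      subst this; simpa using zero_mem_MM _
    · have hd := ih ht
      have : (x :: b :: t).prod - (x :: t₂).prod = x * ((b :: t).prod - t₂.prod) := by
        simp [List.prod_cons, mul_sub]
      rw [this]
      have := MM_mul (mem_MM_one hx) hd
      simpa [List.length_cons, add_comm] using this
  | swap x y l =>
    intro h
    have hy : y ∈ freeLie k V := h y (by simp)
    have hx : x ∈ freeLie k V := h x (by simp)
    have hl : ∀ a ∈ l, a ∈ freeLie k V := fun a ha => h a (by simp [ha])
    have hb : y * x - x * y ∈ freeLie k V := by
      have := (freeLie k V).lie_mem hy hx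
      simpa [LieRing.of_associative_ring_bracket] using this
    have key : (y :: x :: l).prod - (x :: y :: l).prod = ((y * x - x * y) :: l).prod := by
      simp [List.prod_cons, sub_mul, mul_assoc]
    rw [key]
    have := mem_MM_of_list (l := (y * x - x * y) :: l)
      (by intro a ha; rcases List.mem_cons.1 ha with rfl | ha
          · exact hb
          · exact hl a ha)
    simpa using this
  | @trans l₁ l₂ l₃ hp₁ hp₂ ih₁ ih₂ =>
    intro h
    have h₂ : ∀ a ∈ l₂, a ∈ freeLie k V := fun a ha => h a (hp₁.mem_iff.2 ha)
    have h2 := ih₂ h₂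
    rw [← hp₁.length_eq] at h2
    have := Submodule.add_mem _ (ih₁ h) h2
    simpa using this

lemma list_ofFn_perm {m : ℕ} (f : Fin m → TensorAlgebra k V) (σ : Equiv.Perm (Fin m)) :
    (List.ofFn (f ∘ σ)).Perm (List.ofFn f) := by
  exact σ.ofFn_comp_perm f

lemma one_mem_MM_zero : (1 : TensorAlgebra k V) ∈ MM k V 0 :=
  Submodule.subset_span ⟨[], rfl, by simp, by simp⟩

lemma one_mem_symL_zero : (1 : TensorAlgebra k V) ∈ symL k V 0 := by
  apply Submodule.subset_span
  refine ⟨Fin.elim0, ?_⟩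
  simp

lemma F_mono {m m' : ℕ} (h : m ≤ m') :
    (⨆ r, ⨆ (_ : r ≤ m), symL k V r) ≤ ⨆ r, ⨆ (_ : r ≤ m'), symL k V r :=
  iSup₂_le fun r hr => le_iSup₂ (f := fun r (_ : r ≤ m') => symL k V r) r (hr.trans h)

lemma symL_le_F {r m : ℕ} (h : r ≤ m) :
    symL k V r ≤ ⨆ r, ⨆ (_ : r ≤ m), symL k V r :=
  le_iSup₂ (f := fun r (_ : r ≤ m) => symL k V r) r h

lemma MM_le_F (m : ℕ) : MM k V m ≤ ⨆ r, ⨆ (_ : r ≤ m), symL k V r := by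
  induction m using Nat.strong_induction_on with
  | _ m ih =>
    apply Submodule.span_le.2
    rintro x ⟨l, rfl, hl, rfl⟩
    rcases eq_or_ne l [] with rfl | hne
    · exact symL_le_F (Nat.zero_le _) (by simpa using one_mem_symL_zero)
    · have hmpos : 0 < l.length := List.length_pos_iff.2 hne
      set β : Fin l.length → freeLie k V := fun i => ⟨l.get i, hl _ (l.get_mem i)⟩ with hβ
      have hofn : List.ofFn (fun i => (β i : TensorAlgebra k V)) = l := List.ofFn_get l
      have hsym : (∑ σ : Equiv.Perm (Fin l.length),
          (List.ofFn fun i => ((β (σ i) : TensorAlgebra k V))).prod) ∈ symL k V l.length :=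
        Submodule.subset_span ⟨β, rfl⟩
      have hdiff : ∀ σ : Equiv.Perm (Fin l.length),
          (List.ofFn fun i => ((β (σ i) : TensorAlgebra k V))).prod - l.prod
            ∈ MM k V (l.length - 1) := by
        intro σ
        have hp : (List.ofFn ((fun i => (β i : TensorAlgebra k V)) ∘ σ)).Perm l := by
          conv_rhs => rw [← hofn]
          exact list_ofFn_perm _ σ
        have := perm_diff hp (by
          intro a ha
          rcases List.mem_ofFn.1 ha with ⟨i, rfl⟩
          exact (β (σ i)).2)
        simpa [Function.comp_def] using this
      have key : (Nat.factorial l.length) • l.prod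
          = (∑ σ : Equiv.Perm (Fin l.length),
              (List.ofFn fun i => ((β (σ i) : TensorAlgebra k V))).prod)
            - ∑ σ : Equiv.Perm (Fin l.length),
                ((List.ofFn fun i => ((β (σ i) : TensorAlgebra k V))).prod - l.prod) := by
        rw [Finset.sum_sub_distrib, Finset.sum_const, Finset.card_univ, Fintype.card_perm,
          Fintype.card_fin]
        abel
      have hmem : (Nat.factorial l.length) • l.prod
          ∈ ⨆ r, ⨆ (_ : r ≤ l.length), symL k V r := by
        rw [key]
        refine Submodule.sub_mem _ (symL_le_F le_rfl hsym) (Submodule.sum_mem _ fun σ _ => ?_)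
        exact F_mono (Nat.sub_le _ _) (ih (l.length - 1) (by omega) (hdiff σ))
      have hfac : ((Nat.factorial l.length : k)) ≠ 0 :=
        Nat.cast_ne_zero.2 (Nat.factorial_pos _).ne'
      have : l.prod = ((Nat.factorial l.length : k)⁻¹)
          • ((Nat.factorial l.length) • l.prod) := by
        rw [← Nat.cast_smul_eq_nsmul k, smul_smul, inv_mul_cancel₀ hfac, one_smul]
      rw [this]
      exact Submodule.smul_mem _ _ hmem

lemma prod_mem_MM_sum {m : ℕ} (c : Fin m → TensorAlgebra k V) (w : Fin m → ℕ)
    (h : ∀ i, c i ∈ MM k V (w i)) : (List.ofFn c).prod ∈ MM k V (∑ i, w i) := by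
  induction m with
  | zero => simpa using one_mem_MM_zero
  | succ n ih =>
    rw [List.ofFn_succ, List.prod_cons, Fin.sum_univ_succ]
    exact MM_mul (h 0) (ih _ _ fun i => h i.succ)

lemma symL_one_le : symL k V 1 ≤ (freeLie k V).toSubmodule := by
  apply Submodule.span_le.2
  rintro x ⟨β, rfl⟩
  have h1 : ∀ σ : Equiv.Perm (Fin 1),
      (List.ofFn fun i => ((β (σ i) : TensorAlgebra k V))).prod = (β 0 : TensorAlgebra k V) := by
    intro σ
    have : σ 0 = 0 := Subsingleton.elim _ _
    simp [List.ofFn_succ, this]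
  rw [Finset.sum_congr rfl fun σ _ => h1 σ, Finset.sum_const, Finset.card_univ,
    Fintype.card_perm, Fintype.card_fin]
  simpa using (β 0).2

lemma symL_zero_le : symL k V 0 ≤ Submodule.span k {(1 : TensorAlgebra k V)} := by
  apply Submodule.span_le.2
  rintro x ⟨β, rfl⟩
  apply Submodule.subset_span
  simp

lemma insertNth_succ_const {α : Type*} {n : ℕ} (j : Fin (n + 1)) (x : α) (g : Fin (n + 1) → α) :
    Fin.insertNth (α := fun _ => α) j.succ x g =
      Fin.cons (g 0) (Fin.insertNth (α := fun _ => α) j x (g ∘ Fin.succ)) := by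
  funext i
  induction i using Fin.cases with
  | zero =>
    have h0 : j.succ.succAbove 0 = 0 := Fin.succ_succAbove_zero j
    rw [Fin.cons_zero, ← h0, Fin.insertNth_apply_succAbove]
  | succ i =>
    rw [Fin.cons_succ]
    rcases eq_or_ne i j with rfl | hne
    · rw [Fin.insertNth_apply_same, Fin.insertNth_apply_same]
    · obtain ⟨m, rfl⟩ := Fin.exists_succAbove_eq hne
      rw [← Fin.succ_succAbove_succ, Fin.insertNth_apply_succAbove, Fin.insertNth_apply_succAbove]
      rfl

lemma prod_ofFn_insertNth_one {n : ℕ} (j : Fin (n + 1)) (g : Fin n → TensorAlgebra k V) :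
    (List.ofFn (Fin.insertNth (α := fun _ => TensorAlgebra k V) j 1 g)).prod
      = (List.ofFn g).prod := by
  induction n with
  | zero =>
    have : j = 0 := Fin.fin_one_eq_zero j
    subst this
    simp [Fin.insertNth_zero']
  | succ n ih =>
    induction j using Fin.cases with
    | zero => rw [Fin.insertNth_zero']; simp [List.ofFn_succ]
    | succ j =>
      rw [insertNth_succ_const, List.ofFn_succ, List.prod_cons, List.ofFn_succ (f := g),
        List.prod_cons]
      simp only [Fin.cons_zero, Fin.cons_succ]
      rw [ih j (g ∘ Fin.succ)]
      rfl

lemma comp_insertNth {α β' : Type*} {n : ℕ} (f : α → β') (j : Fin (n + 1)) (x : α)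
    (g : Fin n → α) :
    (fun i => f (Fin.insertNth (α := fun _ => α) j x g i))
      = Fin.insertNth (α := fun _ => β') j (f x) (fun m => f (g m)) := by
  funext i
  rcases eq_or_ne i j with rfl | hne
  · rw [Fin.insertNth_apply_same, Fin.insertNth_apply_same]
  · obtain ⟨m, rfl⟩ := Fin.exists_succAbove_eq hne
    rw [Fin.insertNth_apply_succAbove, Fin.insertNth_apply_succAbove]

def insPerm {n : ℕ} (j : Fin (n + 1)) (τ : Equiv.Perm (Fin n)) : Fin (n + 1) → Fin (n + 1) :=
  Fin.insertNth (α := fun _ => Fin (n + 1)) j (Fin.last n) (fun m => (τ m).castSucc)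

lemma insPerm_apply_same {n : ℕ} (j : Fin (n + 1)) (τ : Equiv.Perm (Fin n)) :
    insPerm j τ j = Fin.last n := Fin.insertNth_apply_same _ _ _

lemma insPerm_apply_succAbove {n : ℕ} (j : Fin (n + 1)) (τ : Equiv.Perm (Fin n)) (m : Fin n) :
    insPerm j τ (j.succAbove m) = (τ m).castSucc := Fin.insertNth_apply_succAbove _ _ _ _

lemma insPerm_bijective {n : ℕ} (j : Fin (n + 1)) (τ : Equiv.Perm (Fin n)) :
    Function.Bijective (insPerm j τ) := by
  have hinj : Function.Injective (insPerm j τ) := by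
    intro a b hab
    by_cases ha : a = j <;> by_cases hb : b = j
    · rw [ha, hb]
    · exfalso
      subst ha
      obtain ⟨m, rfl⟩ := Fin.exists_succAbove_eq hb
      rw [insPerm_apply_same, insPerm_apply_succAbove] at hab
      exact ((Fin.castSucc_lt_last (τ m)).ne' hab)
    · exfalso
      subst hb
      obtain ⟨m, rfl⟩ := Fin.exists_succAbove_eq ha
      rw [insPerm_apply_same, insPerm_apply_succAbove] at hab
      exact ((Fin.castSucc_lt_last (τ m)).ne hab)
    · obtain ⟨m, rfl⟩ := Fin.exists_succAbove_eq ha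
      obtain ⟨m', rfl⟩ := Fin.exists_succAbove_eq hb
      rw [insPerm_apply_succAbove, insPerm_apply_succAbove] at hab
      rw [τ.injective (Fin.castSucc_injective _ hab)]
  exact Finite.injective_iff_bijective.1 hinj

def EPerm {n : ℕ} (j : Fin (n + 1)) (τ : Equiv.Perm (Fin n)) : Equiv.Perm (Fin (n + 1)) :=
  Equiv.ofBijective _ (insPerm_bijective j τ)

lemma EPerm_apply {n : ℕ} (j : Fin (n + 1)) (τ : Equiv.Perm (Fin n)) (i : Fin (n + 1)) :
    EPerm j τ i = insPerm j τ i := rfl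

lemma EPerm_bijective {n : ℕ} :
    Function.Bijective (fun p : Fin (n + 1) × Equiv.Perm (Fin n) => EPerm p.1 p.2) := by
  have hinj : Function.Injective
      (fun p : Fin (n + 1) × Equiv.Perm (Fin n) => EPerm p.1 p.2) := by
    rintro ⟨j, τ⟩ ⟨j', τ'⟩ h
    simp only at h
    have hfun : ∀ i, insPerm j τ i = insPerm j' τ' i := by
      intro i
      rw [← EPerm_apply, ← EPerm_apply, h]
    have hj : j = j' := by
      by_contra hne
      obtain ⟨m, rfl⟩ := Fin.exists_succAbove_eq hne
      have := hfun (j'.succAbove m)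
      rw [insPerm_apply_same, insPerm_apply_succAbove] at this
      exact (Fin.castSucc_lt_last (τ' m)).ne' this
    subst hj
    have hτ : τ = τ' := by
      ext m
      have := hfun (j.succAbove m)
      rw [insPerm_apply_succAbove, insPerm_apply_succAbove] at this
      exact Fin.ext_iff.1 (Fin.castSucc_injective _ this)
    rw [hτ]
  refine (Fintype.bijective_iff_injective_and_card _).2 ⟨hinj, ?_⟩
  simp [Fintype.card_perm, Nat.factorial_succ, mul_comm]

lemma snoc_one_sum_mem {n : ℕ} (b : Fin n → freeLie k V) :
    (∑ σ : Equiv.Perm (Fin (n + 1)),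
      (List.ofFn fun i => Fin.snoc (α := fun _ => TensorAlgebra k V)
        (fun j => ((b j : TensorAlgebra k V))) 1 (σ i)).prod)
      ∈ symL k V n := by
  set d : Fin (n + 1) → TensorAlgebra k V :=
    Fin.snoc (α := fun _ => TensorAlgebra k V) (fun j => ((b j : TensorAlgebra k V))) 1 with hd
  have hword : ∀ (j : Fin (n + 1)) (τ : Equiv.Perm (Fin n)),
      (List.ofFn fun i => d (EPerm j τ i)).prod
        = (List.ofFn fun i => ((b (τ i) : TensorAlgebra k V))).prod := by
    intro j τ
    have h1 : (fun i => d (insPerm j τ i))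
        = Fin.insertNth (α := fun _ => TensorAlgebra k V) j (d (Fin.last n))
            (fun m => d ((τ m).castSucc)) :=
      comp_insertNth d j (Fin.last n) (fun m => (τ m).castSucc)
    have h2 : d (Fin.last n) = 1 := Fin.snoc_last _ _
    have h3 : (fun m => d ((τ m).castSucc))
        = fun m => ((b (τ m) : TensorAlgebra k V)) := by
      funext m
      exact Fin.snoc_castSucc _ _ _
    calc (List.ofFn fun i => d (EPerm j τ i)).prod
        = (List.ofFn (Fin.insertNth (α := fun _ => TensorAlgebra k V) j 1
            (fun m => ((b (τ m) : TensorAlgebra k V))))).prod := by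
          rw [show (fun i => d (EPerm j τ i)) = (fun i => d (insPerm j τ i)) from rfl, h1, h2, h3]
      _ = (List.ofFn fun i => ((b (τ i) : TensorAlgebra k V))).prod :=
          prod_ofFn_insertNth_one _ _
  have hsum := Fintype.sum_bijective _ (EPerm_bijective (n := n))
    (fun p : Fin (n + 1) × Equiv.Perm (Fin n) =>
      (List.ofFn fun i => ((b (p.2 i) : TensorAlgebra k V))).prod)
    (fun σ : Equiv.Perm (Fin (n + 1)) => (List.ofFn fun i => d (σ i)).prod)
    (fun p => (hword p.1 p.2).symm)
  rw [← hsum, Fintype.sum_prod_type]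
  exact Submodule.sum_mem _ fun j _ => Submodule.subset_span ⟨b, rfl⟩

lemma prod_ofFn_update_smul {m : ℕ} (f : Fin m → TensorAlgebra k V) (j : Fin m) (c : k) :
    (List.ofFn (Function.update f j (c • f j))).prod = c • (List.ofFn f).prod := by
  induction m with
  | zero => exact j.elim0
  | succ n ih =>
    induction j using Fin.cases with
    | zero =>
      rw [List.ofFn_succ, List.ofFn_succ (f := f), List.prod_cons, List.prod_cons]
      have h1 : Function.update f 0 (c • f 0) 0 = c • f 0 := Function.update_self _ _ _
      have h2 : (fun i : Fin n => Function.update f 0 (c • f 0) i.succ) = fun i => f i.succ := by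
        funext i
        exact Function.update_of_ne (Fin.succ_ne_zero i) _ _
      rw [h1, h2, smul_mul_assoc]
    | succ j =>
      rw [List.ofFn_succ, List.ofFn_succ (f := f), List.prod_cons, List.prod_cons]
      have h1 : Function.update f j.succ (c • f j.succ) 0 = f 0 :=
        Function.update_of_ne (Fin.succ_ne_zero j).symm _ _
      have h2 : (fun i : Fin n => Function.update f j.succ (c • f j.succ) i.succ)
          = Function.update (fun i => f i.succ) j (c • f j.succ) := by
        funext i
        rcases eq_or_ne i j with rfl | hne
        · rw [Function.update_self, Function.update_self]
        · rw [Function.update_of_ne (fun h => hne (Fin.succ_injective _ h)),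
            Function.update_of_ne hne]
      rw [h1, h2, ih (fun i => f i.succ) j, mul_smul_comm]

variable (k V)


/-- Let `p ≥ 1` (here `p = n + 1`), let `β₁,…,β_{p−1} ∈ L`, let `q ≥ 0` and
`γ ∈ Sym^q(L)`.  Consider the symmetrization `s(β₁,…,β_{p−1},γ)` of the `p`-tuple
`(c₁,…,c_p) = (β₁,…,β_{p−1},γ)` in `R`.  Then: (a) if `q > 1`, it lies in
`Σ_{r ≤ p+q−1} Sym^r(L)`; (b) if `q ≤ 1`, it lies in `Sym^{p+q−1}(L)`. -/
theorem statement6 (q n : ℕ) (β : Fin n → freeLie k V) (γ : TensorAlgebra k V)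
    (hγ : γ ∈ symL k V q) :
    (1 < q →
      (∑ σ : Equiv.Perm (Fin (n + 1)),
        (List.ofFn fun i =>
          Fin.snoc (α := fun _ => TensorAlgebra k V) (fun j => ((β j : TensorAlgebra k V))) γ (σ i)).prod)
        ∈ ⨆ r ≤ (n + 1) + q - 1, symL k V r) ∧
    (q ≤ 1 →
      (∑ σ : Equiv.Perm (Fin (n + 1)),
        (List.ofFn fun i =>
          Fin.snoc (α := fun _ => TensorAlgebra k V) (fun j => ((β j : TensorAlgebra k V))) γ (σ i)).prod)
        ∈ symL k V ((n + 1) + q - 1)) := by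
  constructor
  · intro _
    have hb : (n + 1) + q - 1 = n + q := by omega
    rw [hb]
    apply Submodule.sum_mem
    intro σ _
    apply MM_le_F (n + q)
    have hword := prod_mem_MM_sum
      (fun i => Fin.snoc (α := fun _ => TensorAlgebra k V)
        (fun j => ((β j : TensorAlgebra k V))) γ (σ i))
      (fun i => if σ i = Fin.last n then q else 1)
      (by
        intro i
        beta_reduce
        by_cases h : σ i = Fin.last n
        · rw [if_pos h, h]
          simpa [Fin.snoc_last] using symL_le_MM q hγ
        · rw [if_neg h]
          obtain ⟨m, hm⟩ := Fin.exists_castSucc_eq.2 h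
          rw [← hm]
          have hsn : Fin.snoc (α := fun _ => TensorAlgebra k V)
              (fun j => ((β j : TensorAlgebra k V))) γ m.castSucc
              = (β m : TensorAlgebra k V) := Fin.snoc_castSucc _ _ _
          rw [hsn]
          exact mem_MM_one (β m).2)
    have hsum : (∑ i, if σ i = Fin.last n then q else 1) = n + q := by
      have h0 : (∑ i, if σ i = Fin.last n then q else 1)
          = ∑ x, if x = Fin.last n then q else 1 :=
        Equiv.sum_comp σ (fun x => if x = Fin.last n then q else 1)
      rw [h0]
      rw [Finset.sum_eq_sum_sdiff_singleton_add (Finset.mem_univ (Fin.last n))]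
      rw [if_pos rfl]
      have h1 : ∀ x ∈ Finset.univ \ {Fin.last n},
          (if x = Fin.last n then q else 1) = 1 := by
        intro x hx
        rw [if_neg (by simpa using (Finset.mem_sdiff.1 hx).2)]
      rw [Finset.sum_congr rfl h1, Finset.sum_const]
      have h2 : (Finset.univ \ {Fin.last n}).card = n := by
        rw [Finset.card_sdiff_of_subset (by simp), Finset.card_univ, Fintype.card_fin]
        simp
      rw [h2]
      simp
    rw [hsum] at hword
    exact hword
  · intro hq
    interval_cases q
    · -- q = 0
      obtain ⟨c, hc⟩ := Submodule.mem_span_singleton.1 (symL_zero_le hγ)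
      subst hc
      show _ ∈ symL k V n
      have hkey : ∀ σ : Equiv.Perm (Fin (n + 1)),
          (List.ofFn fun i => Fin.snoc (α := fun _ => TensorAlgebra k V)
            (fun j => ((β j : TensorAlgebra k V))) (c • 1) (σ i)).prod
          = c • (List.ofFn fun i => Fin.snoc (α := fun _ => TensorAlgebra k V)
              (fun j => ((β j : TensorAlgebra k V))) 1 (σ i)).prod := by
        intro σ
        have hfn : (fun i => Fin.snoc (α := fun _ => TensorAlgebra k V)
              (fun j => ((β j : TensorAlgebra k V))) (c • 1) (σ i))
            = Function.update
                (fun i => Fin.snoc (α := fun _ => TensorAlgebra k V)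
                  (fun j => ((β j : TensorAlgebra k V))) 1 (σ i))
                (σ.symm (Fin.last n))
                (c • (fun i => Fin.snoc (α := fun _ => TensorAlgebra k V)
                  (fun j => ((β j : TensorAlgebra k V))) 1 (σ i)) (σ.symm (Fin.last n))) := by
          funext i
          rcases eq_or_ne i (σ.symm (Fin.last n)) with rfl | hne
          · rw [Function.update_self]
            simp only [Equiv.apply_symm_apply, Fin.snoc_last]
          · rw [Function.update_of_ne hne]
            have hne' : σ i ≠ Fin.last n := fun h => hne (by rw [← h, Equiv.symm_apply_apply])
            obtain ⟨m, hm⟩ := Fin.exists_castSucc_eq.2 hne'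
            rw [← hm, Fin.snoc_castSucc, Fin.snoc_castSucc]
        rw [hfn, prod_ofFn_update_smul]
      rw [Finset.sum_congr rfl fun σ _ => hkey σ, ← Finset.smul_sum]
      exact Submodule.smul_mem _ _ (snoc_one_sum_mem β)
    · -- q = 1
      have hγ' : γ ∈ freeLie k V := symL_one_le hγ
      show _ ∈ symL k V (n + 1)
      set β' : Fin (n + 1) → freeLie k V :=
        Fin.snoc (α := fun _ => freeLie k V) β ⟨γ, hγ'⟩ with hβ'
      have hpt : ∀ j, ((β' j : freeLie k V) : TensorAlgebra k V)
          = Fin.snoc (α := fun _ => TensorAlgebra k V)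
              (fun j => ((β j : TensorAlgebra k V))) γ j := by
        intro j
        induction j using Fin.lastCases with
        | last => rw [hβ', Fin.snoc_last, Fin.snoc_last]
        | cast m => rw [hβ', Fin.snoc_castSucc, Fin.snoc_castSucc]
      have hwit : (∑ σ : Equiv.Perm (Fin (n + 1)),
            (List.ofFn fun i => Fin.snoc (α := fun _ => TensorAlgebra k V)
              (fun j => ((β j : TensorAlgebra k V))) γ (σ i)).prod)
          = ∑ σ : Equiv.Perm (Fin (n + 1)),
              (List.ofFn fun i => ((β' (σ i) : TensorAlgebra k V))).prod := by
        exact Finset.sum_congr rfl fun σ _ =>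
          congrArg List.prod (congrArg List.ofFn (funext fun i => (hpt (σ i)).symm))
      rw [hwit]
      exact Submodule.subset_span ⟨β', rfl⟩

end
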